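/- There do not exist a continuous function k : [0,l] → ℝ differentiable on (0,l) and positive constants ε₂, ε₃, ρ, K, a₅, c₀, a₇ and a bounded function d such that simultaneously (i) K·a₅/2 + K·d̄²·c₀/(2a₇) + K·(d(x))²/(2a₇) < (K/2)·k'(x) for all x ∈ (0,l), and (ii) ε₂ < -ρ·ε₃·k(l) and ε₂ < ρ·ε₃·k(0). In other words, the seventh and eighth inequalities of Lemma 3.6 of Soufyane–Wehbe are incompatible. -/
import Mathlib


theorem stmt_3 (l : ℝ) (hl : 0 < l) :
    ¬ ∃ (k d : ℝ → ℝ) (ε₂ ε₃ ρ K a₅ c₀ a₇ dbar : ℝ),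
      ContinuousOn k (Set.Icc 0 l) ∧ DifferentiableOn ℝ k (Set.Ioo 0 l) ∧
      0 < ε₂ ∧ 0 < ε₃ ∧ 0 < ρ ∧ 0 < K ∧ 0 < a₅ ∧ 0 < c₀ ∧ 0 < a₇ ∧
      dbar = ⨆ x : Set.Icc (0:ℝ) l, |d x| ∧
      (∀ x ∈ Set.Ioo (0:ℝ) l,
        K * a₅ / 2 + K * dbar ^ 2 * c₀ / (2 * a₇) + K * (d x) ^ 2 / (2 * a₇)
          < K / 2 * deriv k x) ∧
      ε₂ < -ρ * ε₃ * k l ∧ ε₂ < ρ * ε₃ * k 0 := by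
  rintro ⟨k, d, ε₂, ε₃, ρ, K, a₅, c₀, a₇, dbar, hcont, hdiff, hε₂, hε₃, hρ, hK,
    ha₅, hc₀, ha₇, -, hderiv, hkl, hk0⟩
  -- deriv k is positive on the interior
  have hpos : ∀ x ∈ interior (Set.Icc (0:ℝ) l), 0 < deriv k x := by
    intro x hx
    rw [interior_Icc] at hx
    have h := hderiv x hx
    have h1 : 0 < K * a₅ / 2 := by positivity
    have h2 : 0 ≤ K * dbar ^ 2 * c₀ / (2 * a₇) := by positivity
    have h3 : 0 ≤ K * (d x) ^ 2 / (2 * a₇) := by positivity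
    nlinarith
  have hmono : StrictMonoOn k (Set.Icc 0 l) := by
    apply strictMonoOn_of_deriv_pos (convex_Icc 0 l) hcont
    intro x hx
    exact hpos x hx
  have h01 : k 0 < k l :=
    hmono (Set.left_mem_Icc.mpr hl.le) (Set.right_mem_Icc.mpr hl.le) hl
  -- k l < 0 < k 0
  have hklneg : k l < 0 := by nlinarith [mul_pos hρ hε₃]
  have hk0pos : 0 < k 0 := by nlinarith [mul_pos hρ hε₃]
  linarith
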